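/- arXiv:1911.01525 — 3 statements merged into one kernel-verified Lean document; each statement's English description precedes it below -/
import Mathlib

section
/- Let Q = ⨂_{j=1}^d Q_j be a product probability measure on ℝ^d with mean vector μ_Q and finite second moments, let μ ∈ ℝ^d, and let Γ ∈ ℝ^{d×d} be positive definite. Let Q* = N(μ, (diag Γ)^{-1}) = ⨂_j N(μ_j, Γ_{jj}^{-1}). Then D(Q ‖ N(μ, Γ^{-1})) - D(Q* ‖ N(μ, Γ^{-1})) = Σ_{j=1}^d D(Q_{(μ_j),j} ‖ Q*_j) + (1/2)(μ_Q - μ)ᵀ Γ (μ_Q - μ), where Q_{(μ_j),j} is the translation of Q_j recentered to have mean μ_j. -/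
open MeasureTheory Matrix

/-- Density of the one-dimensional normal distribution `N(m, s2)`. -/
noncomputable def gaussPDF (m s2 x : ℝ) : ℝ :=
  Real.exp (-(x - m) ^ 2 / (2 * s2)) / Real.sqrt (2 * Real.pi * s2)

/-- Density of the multivariate normal `N(μ, Γ⁻¹)` with precision matrix `Γ`. -/
noncomputable def mvGaussPDF {d : ℕ} (μ : Fin d → ℝ) (Γ : Matrix (Fin d) (Fin d) ℝ)
    (θ : Fin d → ℝ) : ℝ :=
  Real.sqrt (Γ.det / (2 * Real.pi) ^ d) *
    Real.exp (-(1 / 2) * ((θ - μ) ⬝ᵥ Γ.mulVec (θ - μ)))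

/-!
Writing out `log` of the Gaussian density, the divergence of a product density `∏ pⱼ(θⱼ)`
from `N(μ, Γ⁻¹)` is the sum of the negative entropies of the `pⱼ`, minus the log of the
normalising constant, plus `½ E[(θ - μ)ᵀ Γ (θ - μ)]`. Independence of the coordinates gives
`E[(θᵢ - μᵢ)(θₖ - μₖ)] = (mᵢ - μᵢ)(mₖ - μₖ) + δᵢₖ Var pᵢ`, so the quadratic term is
`½ (m - μ)ᵀ Γ (m - μ) + ½ Σⱼ Γⱼⱼ Var pⱼ`. For `Q*` the means are `μ`, `Γⱼⱼ Var = 1`, and the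
entropies are explicit. On the other side, the divergence of the recentred `qⱼ` from
`N(μⱼ, Γⱼⱼ⁻¹)` is its negative entropy plus `log √(2π/Γⱼⱼ) + ½ Γⱼⱼ Var qⱼ`, since recentring
changes neither the entropy nor the variance; the two sides then agree term by term.
-/

open Real ProbabilityTheory
open scoped NNReal

section Moments

variable {f : ℝ → ℝ}

lemma integrable_sub_mul (hf : Integrable f) (hf₁ : Integrable fun x => x * f x) (c : ℝ) :
    Integrable fun x => (x - c) * f x := by
  simp_rw [sub_mul]
  exact hf₁.sub (hf.const_mul c)

lemma integral_sub_mul_eq (hf : Integrable f) (hf₁ : Integrable fun x => x * f x) (c : ℝ) :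
    ∫ x, (x - c) * f x = (∫ x, x * f x) - c * ∫ x, f x := by
  simp_rw [sub_mul]
  rw [integral_sub hf₁ (hf.const_mul c), integral_const_mul]

lemma integrable_sub_sq_mul (hf : Integrable f) (hf₁ : Integrable fun x => x * f x)
    (hf₂ : Integrable fun x => x ^ 2 * f x) (c : ℝ) :
    Integrable fun x => (x - c) ^ 2 * f x := by
  have h := (hf₂.sub (hf₁.const_mul (2 * c))).add (hf.const_mul (c ^ 2))
  refine h.congr (.of_forall fun x => ?_)
  simp only [Pi.add_apply, Pi.sub_apply]
  ring

lemma integral_sub_sq_mul_eq (hf : Integrable f) (hf₁ : Integrable fun x => x * f x)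
    (hf₂ : Integrable fun x => x ^ 2 * f x) (c : ℝ) :
    ∫ x, (x - c) ^ 2 * f x
      = (∫ x, x ^ 2 * f x) - 2 * c * (∫ x, x * f x) + c ^ 2 * ∫ x, f x := by
  have h : (fun x => (x - c) ^ 2 * f x)
      = fun x => (x ^ 2 * f x - 2 * c * (x * f x)) + c ^ 2 * f x := by
    ext x; ring
  have h₂₁ : Integrable fun x => x ^ 2 * f x - 2 * c * (x * f x) :=
    hf₂.sub (hf₁.const_mul _)
  rw [h, integral_add h₂₁ (hf.const_mul _), integral_sub hf₂ (hf₁.const_mul _),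
    integral_const_mul, integral_const_mul]

lemma integral_sub_sq_mul_eq_add (hf : Integrable f) (hf₁ : Integrable fun x => x * f x)
    (hf₂ : Integrable fun x => x ^ 2 * f x) (hf_one : ∫ x, f x = 1) (c : ℝ) :
    ∫ x, (x - c) ^ 2 * f x
      = (∫ x, (x - ∫ y, y * f y) ^ 2 * f x) + ((∫ x, x * f x) - c) ^ 2 := by
  rw [integral_sub_sq_mul_eq hf hf₁ hf₂, integral_sub_sq_mul_eq hf hf₁ hf₂, hf_one]
  ring

end Moments

section Gaussian

variable {m s : ℝ}

lemma gaussPDF_eq_gaussianPDFReal (hs : 0 ≤ s) :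
    gaussPDF m s = gaussianPDFReal m s.toNNReal := by
  ext x
  rw [gaussPDF, gaussianPDFReal_def, div_eq_inv_mul, Real.coe_toNNReal s hs]

lemma integrable_mul_gaussianPDFReal {v : ℝ≥0} (hv : v ≠ 0) {g : ℝ → ℝ}
    (hg : Integrable g (gaussianReal m v)) : Integrable fun x => g x * gaussianPDFReal m v x := by
  rw [gaussianReal_of_var_ne_zero _ hv, integrable_withDensity_iff (measurable_gaussianPDF _ _)
    (.of_forall fun _ => gaussianPDF_lt_top)] at hg
  simpa only [toReal_gaussianPDF] using hg

lemma integral_mul_gaussianPDFReal {v : ℝ≥0} (hv : v ≠ 0) (g : ℝ → ℝ) :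
    ∫ x, g x * gaussianPDFReal m v x = ∫ x, g x ∂gaussianReal m v := by
  simp_rw [integral_gaussianReal_eq_integral_smul hv, smul_eq_mul, mul_comm]

lemma gaussPDF_pos (hs : 0 < s) (x : ℝ) : 0 < gaussPDF m s x := by
  unfold gaussPDF
  positivity

lemma log_gaussPDF (hs : 0 < s) (x : ℝ) :
    log (gaussPDF m s x) = -(x - m) ^ 2 / (2 * s) - log (√(2 * π * s)) := by
  rw [gaussPDF, log_div (exp_pos _).ne' (by positivity), log_exp]

lemma integral_gaussPDF (hs : 0 < s) : ∫ x, gaussPDF m s x = 1 := by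
  rw [gaussPDF_eq_gaussianPDFReal hs.le]
  exact integral_gaussianPDFReal_eq_one m (Real.toNNReal_pos.mpr hs).ne'

lemma integrable_pow_mul_gaussPDF (hs : 0 < s) (n : ℕ) :
    Integrable fun x => x ^ n * gaussPDF m s x := by
  rw [gaussPDF_eq_gaussianPDFReal hs.le]
  exact integrable_mul_gaussianPDFReal (Real.toNNReal_pos.mpr hs).ne'
    (integrable_pow_of_mem_interior_integrableExpSet (X := fun x => x) (by simp) n)

lemma integral_mul_gaussPDF (hs : 0 < s) : ∫ x, x * gaussPDF m s x = m := by
  rw [gaussPDF_eq_gaussianPDFReal hs.le,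
    integral_mul_gaussianPDFReal (Real.toNNReal_pos.mpr hs).ne', integral_id_gaussianReal]

lemma integral_sub_sq_mul_gaussPDF (hs : 0 < s) : ∫ x, (x - m) ^ 2 * gaussPDF m s x = s := by
  have h := variance_eq_integral (μ := gaussianReal m s.toNNReal) measurable_id'.aemeasurable
  rw [variance_fun_id_gaussianReal, integral_id_gaussianReal, Real.coe_toNNReal s hs.le] at h
  rw [gaussPDF_eq_gaussianPDFReal hs.le,
    integral_mul_gaussianPDFReal (Real.toNNReal_pos.mpr hs).ne']
  exact h.symm

lemma integrable_gaussPDF (hs : 0 < s) : Integrable (gaussPDF m s) := by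
  simpa using integrable_pow_mul_gaussPDF (m := m) hs 0

lemma integrable_mul_gaussPDF (hs : 0 < s) : Integrable fun x => x * gaussPDF m s x := by
  simpa using integrable_pow_mul_gaussPDF (m := m) hs 1

lemma integrable_sub_sq_mul_gaussPDF (hs : 0 < s) :
    Integrable fun x => (x - m) ^ 2 * gaussPDF m s x :=
  integrable_sub_sq_mul (integrable_gaussPDF hs) (integrable_mul_gaussPDF hs)
    (integrable_pow_mul_gaussPDF hs 2) m

lemma gaussPDF_mul_log_gaussPDF (hs : 0 < s) (x : ℝ) :
    gaussPDF m s x * log (gaussPDF m s x)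
      = -(2 * s)⁻¹ * ((x - m) ^ 2 * gaussPDF m s x) - log √(2 * π * s) * gaussPDF m s x := by
  rw [log_gaussPDF hs]
  ring

lemma integrable_gaussPDF_mul_log (hs : 0 < s) :
    Integrable fun x => gaussPDF m s x * log (gaussPDF m s x) := by
  simp_rw [gaussPDF_mul_log_gaussPDF hs]
  exact ((integrable_sub_sq_mul_gaussPDF hs).const_mul _).sub ((integrable_gaussPDF hs).const_mul _)

lemma integral_gaussPDF_mul_log (hs : 0 < s) :
    ∫ x, gaussPDF m s x * log (gaussPDF m s x) = -(1 / 2) - log √(2 * π * s) := by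
  simp_rw [gaussPDF_mul_log_gaussPDF hs]
  rw [integral_sub ((integrable_sub_sq_mul_gaussPDF hs).const_mul _)
      ((integrable_gaussPDF hs).const_mul _),
    integral_const_mul, integral_const_mul, integral_sub_sq_mul_gaussPDF hs, integral_gaussPDF hs]
  field_simp

lemma integral_comp_sub_mul_log_div_gaussPDF (hs : 0 < s) {f : ℝ → ℝ}
    (hf : Integrable f) (hf₁ : Integrable fun x => x * f x)
    (hf₂ : Integrable fun x => x ^ 2 * f x) (hent : Integrable fun x => f x * log (f x))
    (a : ℝ) :
    ∫ x, f (x + a - m) * log (f (x + a - m) / gaussPDF m s x)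
      = (∫ x, f x * log (f x)) + (2 * s)⁻¹ * (∫ x, (x - a) ^ 2 * f x)
        + log √(2 * π * s) * ∫ x, f x := by
  have key : ∀ x, f (x + a - m) * log (f (x + a - m) / gaussPDF m s x)
      = (fun y => f y * log (f y) + (2 * s)⁻¹ * ((y - a) ^ 2 * f y)
          + log √(2 * π * s) * f y) (x + (a - m)) := fun x => by
    simp only [← add_sub_assoc]
    by_cases h0 : f (x + a - m) = 0
    · simp [h0]
    rw [log_div h0 (gaussPDF_pos hs x).ne', log_gaussPDF hs]
    field_simp
    ring
  have hsq : Integrable fun y => (2 * s)⁻¹ * ((y - a) ^ 2 * f y) :=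
    (integrable_sub_sq_mul hf hf₁ hf₂ a).const_mul _
  have hsum : Integrable fun y => f y * log (f y) + (2 * s)⁻¹ * ((y - a) ^ 2 * f y) :=
    hent.add hsq
  rw [integral_congr_ae (.of_forall key), integral_add_right_eq_self (μ := volume)
    (fun y => f y * log (f y) + (2 * s)⁻¹ * ((y - a) ^ 2 * f y) + log √(2 * π * s) * f y),
    integral_add hsum (hf.const_mul _), integral_add hent hsq, integral_const_mul,
    integral_const_mul]

end Gaussian

section ProductDensity

variable {ι : Type*} [Fintype ι] [DecidableEq ι] {p : ι → ℝ → ℝ}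

lemma prod_mul_prod_eq_prod_ite (s : Finset ι) (w p : ι → ℝ → ℝ) (θ : ι → ℝ) :
    (∏ i ∈ s, w i (θ i)) * ∏ i, p i (θ i)
      = ∏ i, if i ∈ s then w i (θ i) * p i (θ i) else p i (θ i) := by
  have h : ∏ i ∈ s, w i (θ i) = ∏ i, if i ∈ s then w i (θ i) else 1 := by
    rw [Finset.prod_ite_mem, Finset.univ_inter]
  rw [h, ← Finset.prod_mul_distrib]
  refine Finset.prod_congr rfl fun i _ => ?_
  split_ifs <;> simp

lemma integrable_prod_mul_prod (hp : ∀ i, Integrable (p i)) {s : Finset ι}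
    {w : ι → ℝ → ℝ} (hw : ∀ i ∈ s, Integrable fun x => w i x * p i x) :
    Integrable fun θ : ι → ℝ => (∏ i ∈ s, w i (θ i)) * ∏ i, p i (θ i) := by
  simp_rw [prod_mul_prod_eq_prod_ite]
  refine Integrable.fintype_prod
    (f := fun i x => if i ∈ s then w i x * p i x else p i x) fun i => ?_
  by_cases hi : i ∈ s <;> simp [hi, hw, hp]

lemma integral_prod_mul_prod (hp_one : ∀ i, ∫ x, p i x = 1) (s : Finset ι)
    (w : ι → ℝ → ℝ) :
    ∫ θ : ι → ℝ, (∏ i ∈ s, w i (θ i)) * ∏ i, p i (θ i)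
      = ∏ i ∈ s, ∫ x, w i x * p i x := by
  simp_rw [prod_mul_prod_eq_prod_ite]
  rw [integral_fintype_prod_volume_eq_prod
    (fun i x => if i ∈ s then w i x * p i x else p i x)]
  have h : ∏ i ∈ s, ∫ x, w i x * p i x
      = ∏ i, if i ∈ s then ∫ x, w i x * p i x else 1 := by
    rw [Finset.prod_ite_mem, Finset.univ_inter]
  rw [h]
  refine Finset.prod_congr rfl fun i _ => ?_
  by_cases hi : i ∈ s <;> simp [hi, hp_one]

lemma integrable_comp_mul_prod (hp : ∀ i, Integrable (p i)) {j : ι} {g : ℝ → ℝ}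
    (hg : Integrable fun x => g x * p j x) :
    Integrable fun θ : ι → ℝ => g (θ j) * ∏ i, p i (θ i) := by
  simpa only [Finset.prod_singleton] using
    integrable_prod_mul_prod (s := {j}) (w := fun _ => g) hp fun i hi => by
      rwa [Finset.mem_singleton.mp hi]

lemma integral_comp_mul_prod (hp_one : ∀ i, ∫ x, p i x = 1) (j : ι) (g : ℝ → ℝ) :
    ∫ θ : ι → ℝ, g (θ j) * ∏ i, p i (θ i) = ∫ x, g x * p j x := by
  simpa only [Finset.prod_singleton] using integral_prod_mul_prod hp_one {j} fun _ => g

lemma sub_mul_sub_mul_prod_eq (c : ι → ℝ) (i k : ι) (θ : ι → ℝ) :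
    (θ i - c i) * (θ k - c k) * ∏ l, p l (θ l)
      = if i = k then (∏ l ∈ {i}, (θ l - c l) ^ 2) * ∏ l, p l (θ l)
        else (∏ l ∈ {i, k}, (θ l - c l)) * ∏ l, p l (θ l) := by
  split_ifs with hik
  · subst hik
    rw [Finset.prod_singleton, sq]
  · rw [Finset.prod_pair hik]

variable (hp : ∀ i, Integrable (p i)) (hp₁ : ∀ i, Integrable fun x => x * p i x)
  (hp₂ : ∀ i, Integrable fun x => x ^ 2 * p i x)
include hp hp₁ hp₂

lemma integrable_sub_mul_sub_mul_prod (c : ι → ℝ) (i k : ι) :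
    Integrable fun θ : ι → ℝ => (θ i - c i) * (θ k - c k) * ∏ l, p l (θ l) := by
  simp_rw [sub_mul_sub_mul_prod_eq c i k]
  split_ifs with hik
  · exact integrable_prod_mul_prod hp fun l _ =>
      integrable_sub_sq_mul (hp l) (hp₁ l) (hp₂ l) (c l)
  · exact integrable_prod_mul_prod hp fun l _ => integrable_sub_mul (hp l) (hp₁ l) (c l)

lemma integral_sub_mul_sub_mul_prod (hp_one : ∀ i, ∫ x, p i x = 1) (c : ι → ℝ) (i k : ι) :
    ∫ θ : ι → ℝ, (θ i - c i) * (θ k - c k) * ∏ l, p l (θ l)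
      = ((∫ x, x * p i x) - c i) * ((∫ x, x * p k x) - c k)
        + if i = k then ∫ x, (x - ∫ y, y * p i y) ^ 2 * p i x else 0 := by
  simp_rw [sub_mul_sub_mul_prod_eq c i k]
  split_ifs with hik
  · subst hik
    rw [integral_prod_mul_prod hp_one _ fun l x => (x - c l) ^ 2, Finset.prod_singleton,
      integral_sub_sq_mul_eq_add (hp i) (hp₁ i) (hp₂ i) (hp_one i)]
    ring
  · rw [integral_prod_mul_prod hp_one _ fun l x => x - c l, Finset.prod_pair hik,
      integral_sub_mul_eq (hp i) (hp₁ i), integral_sub_mul_eq (hp k) (hp₁ k), hp_one, hp_one]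
    ring

omit [DecidableEq ι] hp hp₁ hp₂ in
lemma dotProduct_sub_mulVec_sub_mul (A : Matrix ι ι ℝ) (c θ : ι → ℝ) (P : ℝ) :
    ((θ - c) ⬝ᵥ A *ᵥ (θ - c)) * P
      = ∑ i, ∑ k, A i k * ((θ i - c i) * (θ k - c k) * P) := by
  simp only [dotProduct, mulVec, Pi.sub_apply, Finset.mul_sum, Finset.sum_mul]
  refine Finset.sum_congr rfl fun i _ => Finset.sum_congr rfl fun k _ => ?_
  ring

lemma integrable_dotProduct_sub_mulVec_sub_mul_prod (A : Matrix ι ι ℝ) (c : ι → ℝ) :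
    Integrable fun θ : ι → ℝ => ((θ - c) ⬝ᵥ A *ᵥ (θ - c)) * ∏ l, p l (θ l) := by
  simp_rw [dotProduct_sub_mulVec_sub_mul]
  exact integrable_finsetSum _ fun i _ => integrable_finsetSum _ fun k _ =>
    (integrable_sub_mul_sub_mul_prod hp hp₁ hp₂ c i k).const_mul _

lemma integral_dotProduct_sub_mulVec_sub_mul_prod (hp_one : ∀ i, ∫ x, p i x = 1)
    (A : Matrix ι ι ℝ) (c : ι → ℝ) :
    ∫ θ : ι → ℝ, ((θ - c) ⬝ᵥ A *ᵥ (θ - c)) * ∏ l, p l (θ l)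
      = ((fun i => ∫ x, x * p i x) - c) ⬝ᵥ A *ᵥ ((fun i => ∫ x, x * p i x) - c)
        + ∑ i, A i i * ∫ x, (x - ∫ y, y * p i y) ^ 2 * p i x := by
  have hint : ∀ i k, Integrable fun θ : ι → ℝ =>
      A i k * ((θ i - c i) * (θ k - c k) * ∏ l, p l (θ l)) := fun i k =>
    (integrable_sub_mul_sub_mul_prod hp hp₁ hp₂ c i k).const_mul _
  simp_rw [dotProduct_sub_mulVec_sub_mul]
  rw [integral_finsetSum _ fun i _ => integrable_finsetSum _ fun k _ => hint i k]
  have hrow : ∀ i,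
      ∫ θ : ι → ℝ, ∑ k, A i k * ((θ i - c i) * (θ k - c k) * ∏ l, p l (θ l))
      = ∑ k, A i k * (((∫ x, x * p i x) - c i) * ((∫ x, x * p k x) - c k)
        + if i = k then ∫ x, (x - ∫ y, y * p i y) ^ 2 * p i x else 0) := fun i => by
    rw [integral_finsetSum _ fun k _ => hint i k]
    simp_rw [integral_const_mul, integral_sub_mul_sub_mul_prod hp hp₁ hp₂ hp_one]
  simp_rw [hrow, mul_add, Finset.sum_add_distrib, mul_ite, mul_zero, Finset.sum_ite_eq,
    Finset.mem_univ, if_true, dotProduct, mulVec, dotProduct, Finset.mul_sum, Pi.sub_apply]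
  congr 1
  refine Finset.sum_congr rfl fun i _ => Finset.sum_congr rfl fun k _ => ?_
  ring

end ProductDensity

section MultivariateGaussian

variable {d : ℕ} {μ : Fin d → ℝ} {Γ : Matrix (Fin d) (Fin d) ℝ}

lemma log_mvGaussPDF (hΓ : 0 < Γ.det) (θ : Fin d → ℝ) :
    log (mvGaussPDF μ Γ θ)
      = log √(Γ.det / (2 * π) ^ d) - (1 / 2) * ((θ - μ) ⬝ᵥ Γ *ᵥ (θ - μ)) := by
  rw [mvGaussPDF, log_mul (by positivity) (exp_pos _).ne', log_exp]
  ring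

lemma prod_mul_log_prod_div_mvGaussPDF (hΓ : 0 < Γ.det) (p : Fin d → ℝ → ℝ)
    (θ : Fin d → ℝ) :
    (∏ j, p j (θ j)) * log ((∏ j, p j (θ j)) / mvGaussPDF μ Γ θ)
      = ∑ j, log (p j (θ j)) * ∏ i, p i (θ i)
        - log √(Γ.det / (2 * π) ^ d) * ∏ i, p i (θ i)
        + (1 / 2) * (((θ - μ) ⬝ᵥ Γ *ᵥ (θ - μ)) * ∏ i, p i (θ i)) := by
  by_cases hP : ∏ j, p j (θ j) = 0
  · simp [hP]
  have hG : mvGaussPDF μ Γ θ ≠ 0 := by unfold mvGaussPDF; positivity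
  rw [log_div hP hG, log_prod fun j _ => Finset.prod_ne_zero_iff.mp hP j (Finset.mem_univ j),
    log_mvGaussPDF hΓ, ← Finset.sum_mul]
  ring

theorem integral_prod_mul_log_prod_div_mvGaussPDF (hΓ : 0 < Γ.det) {p : Fin d → ℝ → ℝ}
    (hp : ∀ i, Integrable (p i)) (hp₁ : ∀ i, Integrable fun x => x * p i x)
    (hp₂ : ∀ i, Integrable fun x => x ^ 2 * p i x)
    (hent : ∀ i, Integrable fun x => p i x * log (p i x)) (hp_one : ∀ i, ∫ x, p i x = 1) :
    ∫ θ : Fin d → ℝ, (∏ j, p j (θ j)) * log ((∏ j, p j (θ j)) / mvGaussPDF μ Γ θ)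
      = ∑ j, (∫ x, p j x * log (p j x)) - log √(Γ.det / (2 * π) ^ d)
        + (1 / 2) * (((fun i => ∫ x, x * p i x) - μ) ⬝ᵥ Γ *ᵥ
            ((fun i => ∫ x, x * p i x) - μ)
          + ∑ j, Γ j j * ∫ x, (x - ∫ y, y * p j y) ^ 2 * p j x) := by
  have hent' : ∀ j, Integrable fun θ : Fin d → ℝ => log (p j (θ j)) * ∏ i, p i (θ i) :=
    fun j => integrable_comp_mul_prod hp (by simpa only [mul_comm] using hent j)
  have hsum : Integrable fun θ : Fin d → ℝ => ∑ j, log (p j (θ j)) * ∏ i, p i (θ i) :=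
    integrable_finsetSum _ fun j _ => hent' j
  have hconst : Integrable fun θ : Fin d → ℝ =>
      log √(Γ.det / (2 * π) ^ d) * ∏ i, p i (θ i) :=
    (Integrable.fintype_prod hp).const_mul _
  have hsub : Integrable fun θ : Fin d → ℝ => ∑ j, log (p j (θ j)) * ∏ i, p i (θ i)
      - log √(Γ.det / (2 * π) ^ d) * ∏ i, p i (θ i) := hsum.sub hconst
  have hquad : Integrable fun θ : Fin d → ℝ =>
      (1 / 2 : ℝ) * (((θ - μ) ⬝ᵥ Γ *ᵥ (θ - μ)) * ∏ i, p i (θ i)) :=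
    (integrable_dotProduct_sub_mulVec_sub_mul_prod hp hp₁ hp₂ Γ μ).const_mul _
  simp_rw [prod_mul_log_prod_div_mvGaussPDF hΓ]
  rw [integral_add hsub hquad, integral_sub hsum hconst,
    integral_finsetSum _ fun j _ => hent' j, integral_const_mul, integral_const_mul,
    integral_dotProduct_sub_mulVec_sub_mul_prod hp hp₁ hp₂ hp_one]
  have hH : ∀ j, ∫ θ : Fin d → ℝ, log (p j (θ j)) * ∏ i, p i (θ i)
      = ∫ x, p j x * log (p j x) := fun j => by
    rw [integral_comp_mul_prod hp_one j fun x => log (p j x)]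
    simp_rw [mul_comm (log _)]
  rw [Finset.sum_congr rfl fun j _ => hH j, integral_fintype_prod_volume_eq_prod,
    Finset.prod_eq_one fun i _ => hp_one i, mul_one]

end MultivariateGaussian

theorem kl_product_gaussian_decomposition_general {d : ℕ}
    (q : Fin d → ℝ → ℝ) (μ : Fin d → ℝ) (Γ : Matrix (Fin d) (Fin d) ℝ)
    (hΓ : Γ.PosDef)
    (hq1 : ∀ j, ∫ x, q j x = 1)
    (hqm1 : ∀ j, Integrable (fun x => x * q j x))
    (hqm2 : ∀ j, Integrable (fun x => x ^ 2 * q j x))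
    (hent : ∀ j, Integrable (fun x => q j x * Real.log (q j x)))
    (mQ : Fin d → ℝ) (hmQ : ∀ j, mQ j = ∫ x, x * q j x) :
    (∫ θ : Fin d → ℝ, (∏ j, q j (θ j)) * Real.log ((∏ j, q j (θ j)) / mvGaussPDF μ Γ θ))
      - (∫ θ : Fin d → ℝ, (∏ j, gaussPDF (μ j) (Γ j j)⁻¹ (θ j)) *
          Real.log ((∏ j, gaussPDF (μ j) (Γ j j)⁻¹ (θ j)) / mvGaussPDF μ Γ θ))
    = (∑ j, ∫ x : ℝ, q j (x + mQ j - μ j) *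
          Real.log (q j (x + mQ j - μ j) / gaussPDF (μ j) (Γ j j)⁻¹ x))
      + (1 / 2) * ((mQ - μ) ⬝ᵥ Γ.mulVec (mQ - μ)) := by
  have hs : ∀ j, 0 < (Γ j j)⁻¹ := fun j => inv_pos.mpr hΓ.diag_pos
  have hq : ∀ j, Integrable (q j) := fun j => integrable_of_integral_eq_one (hq1 j)
  obtain rfl : mQ = fun j => ∫ x, x * q j x := funext hmQ
  rw [integral_prod_mul_log_prod_div_mvGaussPDF hΓ.det_pos hq hqm1 hqm2 hent hq1,
    integral_prod_mul_log_prod_div_mvGaussPDF hΓ.det_pos (fun j => integrable_gaussPDF (hs j))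
      (fun j => integrable_mul_gaussPDF (hs j)) (fun j => integrable_pow_mul_gaussPDF (hs j) 2)
      (fun j => integrable_gaussPDF_mul_log (hs j)) (fun j => integral_gaussPDF (hs j))]
  simp_rw [integral_mul_gaussPDF (hs _), integral_sub_sq_mul_gaussPDF (hs _),
    integral_gaussPDF_mul_log (hs _),
    integral_comp_sub_mul_log_div_gaussPDF (hs _) (hq _) (hqm1 _) (hqm2 _) (hent _), hq1,
    mul_inv_cancel₀ hΓ.diag_pos.ne']
  simp only [sub_self, zero_dotProduct, mul_one, mul_inv, inv_inv, Finset.sum_add_distrib,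
    Finset.sum_sub_distrib, Finset.sum_const, nsmul_eq_mul, mul_add, Finset.mul_sum, one_div,
    mul_assoc]
  ring

/-- Decomposition of the excess KL divergence of a product measure `Q = ⨂ⱼ Qⱼ` to
`N(μ, Γ⁻¹)` over that of `Q* = N(μ, (diag Γ)⁻¹)`:
`D(Q‖N(μ,Γ⁻¹)) - D(Q*‖N(μ,Γ⁻¹)) = Σⱼ D(Q_{(μⱼ),j}‖Q*ⱼ) + ½ (μ_Q-μ)ᵀΓ(μ_Q-μ)`. -/
theorem kl_product_gaussian_decomposition {d : ℕ}
    (q : Fin d → ℝ → ℝ) (μ : Fin d → ℝ) (Γ : Matrix (Fin d) (Fin d) ℝ)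
    (hΓ : Γ.PosDef)
    (hqmeas : ∀ j, Measurable (q j))
    (hq0 : ∀ j x, 0 ≤ q j x)
    (hq1 : ∀ j, ∫ x, q j x = 1)
    (hqm1 : ∀ j, Integrable (fun x => x * q j x))
    (hqm2 : ∀ j, Integrable (fun x => x ^ 2 * q j x))
    (hent : ∀ j, Integrable (fun x => q j x * Real.log (q j x)))
    (mQ : Fin d → ℝ) (hmQ : ∀ j, mQ j = ∫ x, x * q j x)
    (hKL1 : Integrable (fun θ : Fin d → ℝ =>
      (∏ j, q j (θ j)) * Real.log ((∏ j, q j (θ j)) / mvGaussPDF μ Γ θ)))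
    (hKL2 : Integrable (fun θ : Fin d → ℝ =>
      (∏ j, gaussPDF (μ j) (Γ j j)⁻¹ (θ j)) *
        Real.log ((∏ j, gaussPDF (μ j) (Γ j j)⁻¹ (θ j)) / mvGaussPDF μ Γ θ))) :
    (∫ θ : Fin d → ℝ, (∏ j, q j (θ j)) * Real.log ((∏ j, q j (θ j)) / mvGaussPDF μ Γ θ))
      - (∫ θ : Fin d → ℝ, (∏ j, gaussPDF (μ j) (Γ j j)⁻¹ (θ j)) *
          Real.log ((∏ j, gaussPDF (μ j) (Γ j j)⁻¹ (θ j)) / mvGaussPDF μ Γ θ))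
    = (∑ j, ∫ x : ℝ, q j (x + mQ j - μ j) *
          Real.log (q j (x + mQ j - μ j) / gaussPDF (μ j) (Γ j j)⁻¹ x))
      + (1 / 2) * ((mQ - μ) ⬝ᵥ Γ.mulVec (mQ - μ)) :=
  kl_product_gaussian_decomposition_general q μ Γ hΓ hq1 hqm1 hqm2 hent mQ hmQ
end

section
/- Let f and p* be probability densities with Hellinger distance H(f, p*), and fix a truncation level τ > 0. Define Z_f(x) = max(log(f(x)/p*(x)), −τ). Then for every integer j ≥ 2, E_{p*}|Z_f(X)|^j ≤ j! · 2^j · c₀ · H²(f, p*), where c₀ = (e^{τ/2} − 1 − τ/2)/(1 − e^{−τ/2})². -/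
open MeasureTheory Real Set
open scoped Nat

/-!
With `s = Z_f / 2 ≥ -τ / 2`, the pointwise chain
`|Z_f|ʲ ≤ j! 2ʲ (e^{|s|} - 1 - |s|) ≤ j! 2ʲ c₀ (e^s - 1)²` holds because
`φ t = (e^t - 1 - t) / (1 - e^{-t})²` is increasing on `t > 0`, equals `c₀` at `τ / 2` and is at
least `1 / 2` (which covers `s ≥ 0`, where `e^s - 1 - s ≤ (e^s - 1)² / 2`). Truncating
`log (f / p*)` from below at `-τ` only moves `e^s = √(f / p*)` towards `1`, so
`p* (e^s - 1)² ≤ (√f - √p*)²`; integrating gives the bound.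
-/

lemma pow_div_factorial_le_exp_sub_one_sub {t : ℝ} (ht : 0 ≤ t) {j : ℕ} (hj : 2 ≤ j) :
    t ^ j / j ! ≤ exp t - 1 - t := by
  have hsplit := Finset.sum_range_add_sum_Ico (fun i => t ^ i / (i ! : ℝ)) (show 2 ≤ j + 1 by omega)
  have hsingle : t ^ j / (j ! : ℝ) ≤ ∑ i ∈ Finset.Ico 2 (j + 1), t ^ i / i ! :=
    Finset.single_le_sum (f := fun i => t ^ i / (i ! : ℝ)) (fun i _ => by positivity)
      (Finset.mem_Ico.2 ⟨hj, j.lt_succ_self⟩)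
  have hfirst : ∑ i ∈ Finset.range 2, t ^ i / (i ! : ℝ) = 1 + t := by
    norm_num [Finset.sum_range_succ]
  linarith [sum_le_exp_of_nonneg ht (j + 1)]

lemma two_mul_exp_sub_one_sub_le_sq {t : ℝ} (ht : 0 ≤ t) :
    2 * (exp t - 1 - t) ≤ (exp t - 1) ^ 2 := by
  have hmono : Monotone fun u => (exp u - 1) ^ 2 - 2 * (exp u - 1 - u) := by
    refine monotone_of_hasDerivAt_nonneg (f' := fun u => 2 * (exp u - 1) ^ 2) (fun u => ?_)
      (fun u => by positivity)
    refine ((((hasDerivAt_exp u).sub_const 1).fun_pow 2).sub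
      ((((hasDerivAt_exp u).sub_const 1).sub (hasDerivAt_id u)).const_mul 2)).congr_deriv ?_
    norm_num
    ring
  simpa using hmono ht

/-- `c₀ = wongShenRatio (τ / 2)`. -/
noncomputable def wongShenRatio (t : ℝ) : ℝ := (exp t - 1 - t) / (1 - exp (-t)) ^ 2

lemma one_sub_exp_neg_pos {t : ℝ} (ht : 0 < t) : 0 < 1 - exp (-t) :=
  sub_pos.2 (exp_lt_one_iff.2 (neg_lt_zero.2 ht))

lemma hasDerivAt_wongShenRatio {t : ℝ} (ht : 0 < t) :
    HasDerivAt wongShenRatio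
      (((exp t - 1) * (1 - exp (-t)) ^ 2 - (exp t - 1 - t) * (2 * (1 - exp (-t)) * exp (-t)))
        / ((1 - exp (-t)) ^ 2) ^ 2) t := by
  have hnum : HasDerivAt (fun u => exp u - 1 - u) (exp t - 1) t :=
    ((hasDerivAt_exp t).sub_const 1).sub (hasDerivAt_id t)
  have hden : HasDerivAt (fun u => (1 - exp (-u)) ^ 2) (2 * (1 - exp (-t)) * exp (-t)) t := by
    refine ((((hasDerivAt_exp (-t)).comp t (hasDerivAt_neg t)).const_sub 1).fun_pow 2).congr_deriv ?_
    norm_num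
  exact hnum.div hden (pow_pos (one_sub_exp_neg_pos ht) 2).ne'

lemma wongShenRatio_monotoneOn : MonotoneOn wongShenRatio (Ioi 0) := by
  refine monotoneOn_of_hasDerivWithinAt_nonneg (convex_Ioi 0)
    (fun t ht => (hasDerivAt_wongShenRatio ht).continuousAt.continuousWithinAt)
    (fun t ht => (hasDerivAt_wongShenRatio (interior_subset ht)).hasDerivWithinAt)
    (fun t ht => div_nonneg ?_ (by positivity))
  rw [interior_Ioi] at ht
  have hinv : exp (-t) * exp t = 1 := by rw [← exp_add, neg_add_cancel, exp_zero]
  have hfactor : (exp t - 1) * (1 - exp (-t)) ^ 2 - (exp t - 1 - t) * (2 * (1 - exp (-t)) * exp (-t))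
      = (1 - exp (-t)) * exp (-t) * ((exp t - 1) ^ 2 - 2 * (exp t - 1 - t)) := by
    linear_combination (-(1 - exp (-t)) * (exp t - 1)) * hinv
  rw [hfactor]
  have hsq := two_mul_exp_sub_one_sub_le_sq ht.le
  have hpos := one_sub_exp_neg_pos ht
  positivity

lemma one_half_le_wongShenRatio {t : ℝ} (ht : 0 < t) : 1 / 2 ≤ wongShenRatio t := by
  have hpos := one_sub_exp_neg_pos ht
  have hsq : (1 - exp (-t)) ^ 2 ≤ t ^ 2 :=
    pow_le_pow_left₀ hpos.le (by linarith [add_one_le_exp (-t)]) 2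
  rw [wongShenRatio, le_div_iff₀ (by positivity)]
  linarith [quadratic_le_exp_of_nonneg ht.le]

lemma exp_abs_sub_one_sub_abs_le {σ s : ℝ} (hσ : 0 < σ) (hs : -σ ≤ s) :
    exp |s| - 1 - |s| ≤ wongShenRatio σ * (exp s - 1) ^ 2 := by
  rcases le_or_gt 0 s with hs₀ | hs₀
  · rw [abs_of_nonneg hs₀]
    linarith [two_mul_exp_sub_one_sub_le_sq hs₀,
      mul_le_mul_of_nonneg_right (one_half_le_wongShenRatio hσ) (sq_nonneg (exp s - 1))]
  · rw [abs_of_neg hs₀]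
    have hmono : wongShenRatio (-s) ≤ wongShenRatio σ :=
      wongShenRatio_monotoneOn (neg_pos.2 hs₀) hσ (by linarith)
    have hpos : 0 < (1 - exp s) ^ 2 := by
      simpa using pow_pos (one_sub_exp_neg_pos (neg_pos.2 hs₀)) 2
    rw [wongShenRatio, neg_neg, div_le_iff₀ hpos] at hmono
    linarith [show (exp s - 1) ^ 2 = (1 - exp s) ^ 2 by ring]

lemma abs_pow_le_factorial_mul_exp_sub_one_sub {j : ℕ} (hj : 2 ≤ j) (z : ℝ) :
    |z| ^ j ≤ j ! * 2 ^ j * (exp (|z| / 2) - 1 - |z| / 2) := by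
  have h := pow_div_factorial_le_exp_sub_one_sub (by positivity : 0 ≤ |z| / 2) hj
  rw [div_le_iff₀ (by positivity)] at h
  calc |z| ^ j = 2 ^ j * (|z| / 2) ^ j := by rw [← mul_pow]; ring_nf
    _ ≤ 2 ^ j * ((exp (|z| / 2) - 1 - |z| / 2) * j !) := by gcongr
    _ = j ! * 2 ^ j * (exp (|z| / 2) - 1 - |z| / 2) := by ring

lemma abs_pow_le_wongShenRatio_mul {τ z : ℝ} (hτ : 0 < τ) (hz : -τ ≤ z) {j : ℕ} (hj : 2 ≤ j) :
    |z| ^ j ≤ j ! * 2 ^ j * wongShenRatio (τ / 2) * (exp (z / 2) - 1) ^ 2 := by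
  have h := exp_abs_sub_one_sub_abs_le (half_pos hτ) (by linarith : -(τ / 2) ≤ z / 2)
  rw [abs_div, abs_two] at h
  calc |z| ^ j ≤ j ! * 2 ^ j * (exp (|z| / 2) - 1 - |z| / 2) :=
        abs_pow_le_factorial_mul_exp_sub_one_sub hj z
    _ ≤ j ! * 2 ^ j * (wongShenRatio (τ / 2) * (exp (z / 2) - 1) ^ 2) := by gcongr
    _ = j ! * 2 ^ j * wongShenRatio (τ / 2) * (exp (z / 2) - 1) ^ 2 := by ring

lemma sq_sqrt_sub_sqrt_eq_mul (a : ℝ) {b : ℝ} (hb : 0 < b) :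
    (√a - √b) ^ 2 = b * (√(a / b) - 1) ^ 2 := by
  have hsb : 0 < √b := sqrt_pos.2 hb
  rw [sqrt_div' a hb.le]
  field_simp
  rw [sq_sqrt hb.le, mul_comm]

lemma sq_exp_half_max_log_sub_one_le {r τ : ℝ} (hr : 0 < r) (hτ : 0 ≤ τ) :
    (exp (max (log r) (-τ) / 2) - 1) ^ 2 ≤ (√r - 1) ^ 2 := by
  have hmono : Monotone fun u : ℝ => exp (u / 2) := fun a b h => exp_le_exp.2 (by linarith)
  have hsqrt : exp (log r / 2) = √r := by rw [sqrt_eq_rpow, rpow_def_of_pos hr]; ring_nf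
  have hle_one : exp (-τ / 2) ≤ 1 := exp_le_one_iff.2 (by linarith)
  rw [hmono.map_max, hsqrt]
  rcases le_total (exp (-τ / 2)) √r with h | h
  · rw [max_eq_left h]
  · rw [max_eq_right h]
    nlinarith

lemma sq_exp_half_max_log_div_sub_one_mul_le {a b τ : ℝ} (ha : 0 < a) (hb : 0 < b) (hτ : 0 ≤ τ) :
    (exp (max (log (a / b)) (-τ) / 2) - 1) ^ 2 * b ≤ (√a - √b) ^ 2 := by
  rw [sq_sqrt_sub_sqrt_eq_mul a hb, mul_comm]
  exact mul_le_mul_of_nonneg_left (sq_exp_half_max_log_sub_one_le (div_pos ha hb) hτ) hb.le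

lemma MeasureTheory.Integrable.sq_sqrt_sub_sqrt {X : Type*} [MeasurableSpace X] {μ : Measure X}
    {f g : X → ℝ} (hf : Integrable f μ) (hg : Integrable g μ) :
    Integrable (fun x => (√(f x) - √(g x)) ^ 2) μ := by
  refine (hf.abs.add hg.abs).mono'
    (((continuous_sqrt.comp_aestronglyMeasurable hf.1).sub
      (continuous_sqrt.comp_aestronglyMeasurable hg.1)).pow 2) (ae_of_all _ fun x => ?_)
  rw [norm_of_nonneg (sq_nonneg _), Pi.add_apply]
  nlinarith [sq_sqrt' (x := f x), sq_sqrt' (x := g x), mul_nonneg (sqrt_nonneg (f x))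
    (sqrt_nonneg (g x)), max_le (le_abs_self (f x)) (abs_nonneg (f x)),
    max_le (le_abs_self (g x)) (abs_nonneg (g x))]

theorem truncated_loglik_moment_bound_general
    {X : Type*} [MeasurableSpace X] (μ : Measure X)
    (f pstar : X → ℝ)
    (hf0 : ∀ x, 0 < f x) (hp0 : ∀ x, 0 < pstar x)
    (hf1 : ∫ x, f x ∂μ = 1) (hp1 : ∫ x, pstar x ∂μ = 1)
    (τ : ℝ) (hτ : 0 < τ)
    (Zf : X → ℝ) (hZf : ∀ x, Zf x = max (Real.log (f x / pstar x)) (-τ))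
    (H2 : ℝ) (hH2 : H2 = ∫ x, (Real.sqrt (f x) - Real.sqrt (pstar x)) ^ 2 ∂μ)
    (c₀ : ℝ)
    (hc₀ : c₀ = (Real.exp (τ / 2) - 1 - τ / 2) / (1 - Real.exp (-τ / 2)) ^ 2) :
    ∀ j : ℕ, 2 ≤ j →
      ∫ x, |Zf x| ^ j * pstar x ∂μ ≤ (Nat.factorial j : ℝ) * 2 ^ j * c₀ * H2 := by
  intro j hj
  replace hc₀ : c₀ = wongShenRatio (τ / 2) := by rw [hc₀, wongShenRatio, neg_div]
  have hc₀_nonneg : 0 ≤ c₀ := hc₀ ▸ (one_half_le_wongShenRatio (half_pos hτ)).trans' (by norm_num)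
  have hpointwise : ∀ x, |Zf x| ^ j * pstar x ≤ j ! * 2 ^ j * c₀ * (√(f x) - √(pstar x)) ^ 2 := by
    intro x
    have hZ : -τ ≤ Zf x := hZf x ▸ le_max_right _ _
    calc |Zf x| ^ j * pstar x ≤ j ! * 2 ^ j * c₀ * (exp (Zf x / 2) - 1) ^ 2 * pstar x := by
          rw [hc₀]; gcongr; exacts [(hp0 x).le, abs_pow_le_wongShenRatio_mul hτ hZ hj]
      _ ≤ j ! * 2 ^ j * c₀ * (√(f x) - √(pstar x)) ^ 2 := by
          rw [mul_assoc, hZf x]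
          gcongr
          exact sq_exp_half_max_log_div_sub_one_mul_le (hf0 x) (hp0 x) hτ.le
  have hint : Integrable (fun x => (√(f x) - √(pstar x)) ^ 2) μ :=
    (Integrable.of_integral_ne_zero (by simp [hf1])).sq_sqrt_sub_sqrt
      (Integrable.of_integral_ne_zero (by simp [hp1]))
  calc ∫ x, |Zf x| ^ j * pstar x ∂μ
      ≤ ∫ x, j ! * 2 ^ j * c₀ * (√(f x) - √(pstar x)) ^ 2 ∂μ :=
        integral_mono_of_nonneg (ae_of_all _ fun x => mul_nonneg (by positivity) (hp0 x).le)
          (hint.const_mul _) (ae_of_all _ hpointwise)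
    _ = j ! * 2 ^ j * c₀ * H2 := by rw [integral_const_mul, hH2]

/-- Wong–Shen moment bound for the truncated log-likelihood ratio
`Z_f(x) = max(log(f(x)/p*(x)), -τ)`: for every `j ≥ 2`,
`E_{p*}|Z_f|ʲ ≤ j! · 2ʲ · c₀ · H²(f, p*)` with
`c₀ = (e^{τ/2} - 1 - τ/2)/(1 - e^{-τ/2})²`. -/
theorem truncated_loglik_moment_bound
    {X : Type*} [MeasurableSpace X] (μ : Measure X) [SigmaFinite μ]
    (f pstar : X → ℝ)
    (hfmeas : Measurable f) (hpmeas : Measurable pstar)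
    (hf0 : ∀ x, 0 < f x) (hp0 : ∀ x, 0 < pstar x)
    (hf1 : ∫ x, f x ∂μ = 1) (hp1 : ∫ x, pstar x ∂μ = 1)
    (τ : ℝ) (hτ : 0 < τ)
    (Zf : X → ℝ) (hZf : ∀ x, Zf x = max (Real.log (f x / pstar x)) (-τ))
    (H2 : ℝ) (hH2 : H2 = ∫ x, (Real.sqrt (f x) - Real.sqrt (pstar x)) ^ 2 ∂μ)
    (c₀ : ℝ)
    (hc₀ : c₀ = (Real.exp (τ / 2) - 1 - τ / 2) / (1 - Real.exp (-τ / 2)) ^ 2) :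
    ∀ j : ℕ, 2 ≤ j →
      ∫ x, |Zf x| ^ j * pstar x ∂μ ≤ (Nat.factorial j : ℝ) * 2 ^ j * c₀ * H2 :=
  truncated_loglik_moment_bound_general μ f pstar hf0 hp0 hf1 hp1 τ hτ Zf hZf H2 hH2 c₀ hc₀
end

section
/- For probability densities f₁, f₂ and p*, with Z_{f}(x) = max(log(f(x)/p*(x)), −τ) for τ > 0, the truncated log-likelihood ratios satisfy ‖Z_{f₁} − Z_{f₂}‖²_{L²(p*)} ≤ 4 e^{τ} H²(f₁, f₂), where H is the Hellinger distance. -/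
open MeasureTheory Real

lemma one_sided (τ a b : ℝ) (ha : 0 < a) (hb : 0 < b) (hab : b ≤ a) :
    max (Real.log a) (-τ) - max (Real.log b) (-τ)
      ≤ 2 * Real.exp (τ/2) * (Real.sqrt a - Real.sqrt b) := by
  have hsab : Real.sqrt b ≤ Real.sqrt a := Real.sqrt_le_sqrt hab
  rcases le_or_gt (Real.log a) (-τ) with h | h
  · have h2 : Real.log b ≤ -τ := le_trans (Real.log_le_log hb hab) h
    rw [max_eq_right h, max_eq_right h2]
    have : 0 ≤ 2 * Real.exp (τ/2) * (Real.sqrt a - Real.sqrt b) :=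
      mul_nonneg (by positivity) (by linarith)
    linarith
  · set b' := max b (Real.exp (-τ)) with hb'def
    have hb'0 : 0 < b' := lt_of_lt_of_le (Real.exp_pos _) (le_max_right _ _)
    have hmax : max (Real.log b) (-τ) = Real.log b' := by
      rcases le_total b (Real.exp (-τ)) with hc | hc
      · have : Real.log b ≤ -τ := by
          calc Real.log b ≤ Real.log (Real.exp (-τ)) := Real.log_le_log hb hc
          _ = -τ := Real.log_exp _
        rw [max_eq_right this, hb'def, max_eq_right hc, Real.log_exp]
      · have : -τ ≤ Real.log b := by
          calc (-τ) = Real.log (Real.exp (-τ)) := (Real.log_exp _).symm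
          _ ≤ Real.log b := Real.log_le_log (Real.exp_pos _) hc
        rw [max_eq_left this, hb'def, max_eq_left hc]
    have hexpa : Real.exp (-τ) < a := by
      calc Real.exp (-τ) < Real.exp (Real.log a) := Real.exp_lt_exp.mpr h
      _ = a := Real.exp_log ha
    have hab' : b' ≤ a := max_le hab hexpa.le
    have hsab' : Real.sqrt b' ≤ Real.sqrt a := Real.sqrt_le_sqrt hab'
    have hsqe : Real.sqrt (Real.exp (-τ)) = Real.exp (-(τ/2)) := by
      rw [show Real.exp (-τ) = Real.exp (-(τ/2)) * Real.exp (-(τ/2)) by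
        rw [← Real.exp_add]; ring_nf, Real.sqrt_mul_self (Real.exp_pos _).le]
    have hsb' : Real.exp (-(τ/2)) ≤ Real.sqrt b' := by
      rw [← hsqe]; exact Real.sqrt_le_sqrt (le_max_right _ _)
    have hsb'0 : 0 < Real.sqrt b' := Real.sqrt_pos.mpr hb'0
    rw [max_eq_left h.le, hmax]
    have hlog : Real.log a - Real.log b' = 2 * Real.log (Real.sqrt a / Real.sqrt b') := by
      rw [Real.log_div (Real.sqrt_pos.mpr ha).ne' hsb'0.ne', Real.log_sqrt ha.le,
        Real.log_sqrt hb'0.le]; ring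
    have hle : Real.log (Real.sqrt a / Real.sqrt b') ≤ Real.sqrt a / Real.sqrt b' - 1 :=
      Real.log_le_sub_one_of_pos (by positivity)
    have h1 : Real.sqrt a / Real.sqrt b' - 1 = (Real.sqrt a - Real.sqrt b') / Real.sqrt b' := by
      field_simp
    have h2 : (Real.sqrt a - Real.sqrt b') / Real.sqrt b' ≤
        Real.exp (τ/2) * (Real.sqrt a - Real.sqrt b') := by
      rw [div_le_iff₀ hsb'0]
      have hnum : 0 ≤ Real.sqrt a - Real.sqrt b' := by linarith
      have : Real.exp (τ/2) * Real.exp (-(τ/2)) = 1 := by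
        rw [← Real.exp_add]; simp
      have hkey : 1 ≤ Real.exp (τ/2) * Real.sqrt b' := by
        calc (1:ℝ) = Real.exp (τ/2) * Real.exp (-(τ/2)) := this.symm
        _ ≤ Real.exp (τ/2) * Real.sqrt b' :=
          mul_le_mul_of_nonneg_left hsb' (Real.exp_pos _).le
      nlinarith
    have hsbb' : Real.sqrt b ≤ Real.sqrt b' := Real.sqrt_le_sqrt (le_max_left _ _)
    have : Real.sqrt a - Real.sqrt b' ≤ Real.sqrt a - Real.sqrt b := by linarith
    nlinarith [Real.exp_pos (τ/2)]

/-- Lipschitz control of truncated log-likelihood ratios in `L²(p*)` by the Hellinger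
distance: `‖Z_{f₁} - Z_{f₂}‖²_{L²(p*)} ≤ 4 e^τ H²(f₁, f₂)`. -/
theorem truncated_loglik_L2_hellinger_bound
    {X : Type*} [MeasurableSpace X] (μ : Measure X) [SigmaFinite μ]
    (f₁ f₂ pstar : X → ℝ)
    (hf₁ : Measurable f₁) (hf₂ : Measurable f₂) (hp : Measurable pstar)
    (hf₁0 : ∀ x, 0 < f₁ x) (hf₂0 : ∀ x, 0 < f₂ x) (hp0 : ∀ x, 0 < pstar x)
    (hf₁1 : ∫ x, f₁ x ∂μ = 1) (hf₂1 : ∫ x, f₂ x ∂μ = 1) (hp1 : ∫ x, pstar x ∂μ = 1)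
    (τ : ℝ) (hτ : 0 < τ)
    (Z : (X → ℝ) → X → ℝ)
    (hZ : ∀ f x, Z f x = max (Real.log (f x / pstar x)) (-τ)) :
    ∫⁻ x, ENNReal.ofReal ((Z f₁ x - Z f₂ x) ^ 2 * pstar x) ∂μ
      ≤ ENNReal.ofReal (4 * Real.exp τ) *
          ∫⁻ x, ENNReal.ofReal ((Real.sqrt (f₁ x) - Real.sqrt (f₂ x)) ^ 2) ∂μ := by
  have key : ∀ x, (Z f₁ x - Z f₂ x) ^ 2 * pstar x
      ≤ 4 * Real.exp τ * (Real.sqrt (f₁ x) - Real.sqrt (f₂ x)) ^ 2 := by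
    intro x
    set a := f₁ x / pstar x with hadef
    set b := f₂ x / pstar x with hbdef
    have hpx := hp0 x
    have ha : 0 < a := div_pos (hf₁0 x) hpx
    have hb : 0 < b := div_pos (hf₂0 x) hpx
    have habs : |Z f₁ x - Z f₂ x| ≤ 2 * Real.exp (τ/2) * |Real.sqrt a - Real.sqrt b| := by
      rw [hZ, hZ]
      rcases le_total b a with hab | hab
      · rw [abs_of_nonneg (by linarith [Real.sqrt_le_sqrt hab] : (0:ℝ) ≤ Real.sqrt a - Real.sqrt b)]
        have h1 : max (Real.log a) (-τ) - max (Real.log b) (-τ) ≥ 0 := by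
          have := Real.log_le_log hb hab
          simp only [sub_nonneg, ge_iff_le]
          exact max_le_max this le_rfl
        rw [abs_of_nonneg (by linarith)]
        exact one_sided τ a b ha hb hab
      · rw [abs_sub_comm, abs_sub_comm (Real.sqrt a)]
        rw [abs_of_nonneg (by linarith [Real.sqrt_le_sqrt hab] : (0:ℝ) ≤ Real.sqrt b - Real.sqrt a)]
        have h1 : max (Real.log b) (-τ) - max (Real.log a) (-τ) ≥ 0 := by
          have := Real.log_le_log ha hab
          simp only [sub_nonneg, ge_iff_le]
          exact max_le_max this le_rfl
        rw [abs_of_nonneg (by linarith)]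
        exact one_sided τ b a hb ha hab
    have hsq : (Z f₁ x - Z f₂ x) ^ 2 ≤ 4 * Real.exp τ * (Real.sqrt a - Real.sqrt b) ^ 2 := by
      have h2 : (Z f₁ x - Z f₂ x) ^ 2 ≤ (2 * Real.exp (τ/2) * |Real.sqrt a - Real.sqrt b|) ^ 2 := by
        rw [← sq_abs (Z f₁ x - Z f₂ x)]
        exact pow_le_pow_left₀ (abs_nonneg _) habs 2
      calc (Z f₁ x - Z f₂ x) ^ 2 ≤ (2 * Real.exp (τ/2) * |Real.sqrt a - Real.sqrt b|) ^ 2 := h2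
      _ = 4 * Real.exp τ * (Real.sqrt a - Real.sqrt b) ^ 2 := by
          rw [mul_pow, mul_pow, sq_abs, pow_two (Real.exp (τ/2)), ← Real.exp_add, add_halves]
          norm_num
    have hab2 : (Real.sqrt a - Real.sqrt b) ^ 2 * pstar x
        = (Real.sqrt (f₁ x) - Real.sqrt (f₂ x)) ^ 2 := by
      rw [hadef, hbdef, Real.sqrt_div' _ hpx.le, Real.sqrt_div' _ hpx.le, div_sub_div_same,
        div_pow, Real.sq_sqrt hpx.le, div_mul_cancel₀]
      exact hpx.ne'
    calc (Z f₁ x - Z f₂ x) ^ 2 * pstar x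
        ≤ 4 * Real.exp τ * (Real.sqrt a - Real.sqrt b) ^ 2 * pstar x :=
          mul_le_mul_of_nonneg_right hsq hpx.le
      _ = 4 * Real.exp τ * ((Real.sqrt a - Real.sqrt b) ^ 2 * pstar x) := by ring
      _ = _ := by rw [hab2]
  calc ∫⁻ x, ENNReal.ofReal ((Z f₁ x - Z f₂ x) ^ 2 * pstar x) ∂μ
      ≤ ∫⁻ x, ENNReal.ofReal (4 * Real.exp τ * (Real.sqrt (f₁ x) - Real.sqrt (f₂ x)) ^ 2) ∂μ :=
        lintegral_mono fun x => ENNReal.ofReal_le_ofReal (key x)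
    _ = ∫⁻ x, ENNReal.ofReal (4 * Real.exp τ) *
          ENNReal.ofReal ((Real.sqrt (f₁ x) - Real.sqrt (f₂ x)) ^ 2) ∂μ := by
        congr 1; funext x
        rw [ENNReal.ofReal_mul (by positivity)]
    _ = _ := lintegral_const_mul' _ _ ENNReal.ofReal_ne_top
end
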